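/- arXiv:1811.01189 — 3 statements merged into one kernel-verified Lean document; each statement's English description precedes it below -/
import Mathlib

section
/- Let f : ℂ → ℂ be a complex polynomial, a, b, t ∈ ℝ, and let f_t(z) = f(z) + t(a+ib)z̄ with associated real map (g₁, g₂) = (Re f_t, Im f_t) and Jacobian J = ∂(g₁,g₂)/∂(x,y). Define G₁ = ∂(g₁, J)/∂(x,y), G₂ = ∂(g₂, J)/∂(x,y), and G_t = G₁ + iG₂. Then G_t(z) = −2i·(f'(z))²·conj(f''(z)) + 2ti·(a+ib)·f''(z)·conj(f'(z)). -/
open Complex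

noncomputable section

/-- Partial derivative in the `x`-direction of a real-valued function on `ℂ`. -/
def pdxR (u : ℂ → ℝ) (w : ℂ) : ℝ := fderiv ℝ u w 1
/-- Partial derivative in the `y`-direction of a real-valued function on `ℂ`. -/
def pdyR (u : ℂ → ℝ) (w : ℂ) : ℝ := fderiv ℝ u w Complex.I

/-- Jacobian determinant `∂(u,v)/∂(x,y) = u_x v_y − u_y v_x`. -/
def jac2 (u v : ℂ → ℝ) (w : ℂ) : ℝ := pdxR u w * pdyR v w - pdyR u w * pdxR v w

/-- The linear deformation `f_t(z) = f(z) + t(a+ib)z̄`. -/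
def ft (f : Polynomial ℂ) (a b t : ℝ) (z : ℂ) : ℂ :=
  f.eval z + (t : ℂ) * (a + Complex.I * b) * (starRingEnd ℂ) z

/-! The real derivative of `f_t` at `w` is `f'(w) dz + c dz̄` with `c = t(a+ib)`, so its Jacobian is
`J = |f'|² - |c|²`. For any `g` with real derivative `p dz + q dz̄` and any real `u`, the combination
`∂(Re g, u) + i ∂(Im g, u)` equals `i (q conj(∇u) - p ∇u)`, where `∇u = u_x + i u_y = 2 ∂u/∂z̄`; for
`u = J` one has `∇J = 2 f' conj f''`, which gives the formula. -/

open ComplexConjugate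

def complexGradient (u : ℂ → ℝ) (w : ℂ) : ℂ := pdxR u w + I * pdyR u w

section RealDerivative

variable {g : ℂ → ℂ} {L : ℂ →L[ℝ] ℂ} {p q w : ℂ}

lemma HasFDerivAt.fderiv_re_apply (hg : HasFDerivAt g L w) (v : ℂ) :
    fderiv ℝ (fun w => (g w).re) w v = (L v).re :=
  congrArg (· v) (reCLM.hasFDerivAt.comp w hg).fderiv

lemma HasFDerivAt.fderiv_im_apply (hg : HasFDerivAt g L w) (v : ℂ) :
    fderiv ℝ (fun w => (g w).im) w v = (L v).im :=
  congrArg (· v) (imCLM.hasFDerivAt.comp w hg).fderiv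

lemma jac2_re_im_of_hasFDerivAt
    (hg : HasFDerivAt g (p • (1 : ℂ →L[ℝ] ℂ) + q • conjCLE.toContinuousLinearMap) w) :
    jac2 (fun w => (g w).re) (fun w => (g w).im) w = normSq p - normSq q := by
  simp [jac2, pdxR, pdyR, hg.fderiv_re_apply, hg.fderiv_im_apply, normSq_apply]
  ring

lemma jac2_re_add_I_mul_jac2_im
    (hg : HasFDerivAt g (p • (1 : ℂ →L[ℝ] ℂ) + q • conjCLE.toContinuousLinearMap) w)
    (u : ℂ → ℝ) :
    (jac2 (fun w => (g w).re) u w : ℂ) + I * jac2 (fun w => (g w).im) u w =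
      I * (q * conj (complexGradient u w) - p * complexGradient u w) := by
  apply Complex.ext <;>
    simp [jac2, pdxR, pdyR, complexGradient, hg.fderiv_re_apply, hg.fderiv_im_apply] <;>
    ring

lemma complexGradient_normSq_sub_const {h : ℂ → ℂ} {h' : ℂ} (hh : HasDerivAt h h' w) (C : ℝ) :
    complexGradient (fun w => normSq (h w) - C) w = 2 * h w * conj h' := by
  have hsq := ((hh.hasFDerivAt.restrictScalars ℝ).norm_sq).sub_const C
  simp only [← normSq_eq_norm_sq] at hsq
  apply Complex.ext <;>
    simp [complexGradient, pdxR, pdyR, hsq.fderiv, Complex.inner] <;> ring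

end RealDerivative

lemma hasFDerivAt_ft (f : Polynomial ℂ) (a b t : ℝ) (w : ℂ) :
    HasFDerivAt (ft f a b t)
      (f.derivative.eval w • (1 : ℂ →L[ℝ] ℂ) +
        ((t : ℂ) * (a + I * b)) • conjCLE.toContinuousLinearMap) w := by
  have hf := (f.hasDerivAt w).hasFDerivAt.restrictScalars ℝ
  refine (hf.add (conjCLE.toContinuousLinearMap.hasFDerivAt.const_mul
    ((t : ℂ) * (a + I * b)))).congr_fderiv ?_
  ext v; simp [mul_comm]

theorem Gt_formula (f : Polynomial ℂ) (a b t : ℝ) (z : ℂ) :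
    (jac2 (fun w => (ft f a b t w).re)
        (fun w => jac2 (fun w' => (ft f a b t w').re) (fun w' => (ft f a b t w').im) w) z : ℂ) +
      Complex.I *
        (jac2 (fun w => (ft f a b t w).im)
          (fun w => jac2 (fun w' => (ft f a b t w').re) (fun w' => (ft f a b t w').im) w) z) =
      -2 * Complex.I * (f.derivative.eval z) ^ 2 *
          (starRingEnd ℂ) (f.derivative.derivative.eval z) +
        2 * t * Complex.I * (a + Complex.I * b) * f.derivative.derivative.eval z *
          (starRingEnd ℂ) (f.derivative.eval z) := by
  have hJ : (fun w => jac2 (fun w' => (ft f a b t w').re) (fun w' => (ft f a b t w').im) w) =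
      fun w => normSq (f.derivative.eval w) - normSq ((t : ℂ) * (a + I * b)) :=
    funext fun w => jac2_re_im_of_hasFDerivAt (hasFDerivAt_ft f a b t w)
  rw [hJ, jac2_re_add_I_mul_jac2_im (hasFDerivAt_ft f a b t z),
    complexGradient_normSq_sub_const (f.derivative.hasDerivAt z)]
  simp only [map_mul, map_ofNat, conj_conj]
  ring

end
end

section
/- Let f : ℂ → ℂ be a complex polynomial with f(0) = 0 of multiplicity k ≥ 2 at the origin (i.e., f(z) = c z^k + higher order terms with c ≠ 0). Define G₀(z) = −2i(f'(z))²·conj(f''(z)). Then the origin is an isolated zero of G₀ and the winding number of G₀/|G₀| on a sufficiently small circle around the origin equals k. -/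
open Complex Real

noncomputable section

/-- `G₀(z) = −2i(f'(z))² conj(f''(z))`. -/
def G0 (f : Polynomial ℂ) (z : ℂ) : ℂ :=
  -2 * Complex.I * (f.derivative.eval z) ^ 2 * (starRingEnd ℂ) (f.derivative.derivative.eval z)

/-!
Writing `f = z^k g` with `g(0) ≠ 0`, one gets `f' = z^(k-1) h` and `f'' = z^(k-2) m` with
`h(0), m(0) ≠ 0`, hence `G₀(z) = z^(2k-2) conj(z)^(k-2) Q(z)` with `Q` continuous and `Q(0) ≠ 0`.
On the circle `z = ε e^{is}` the monomial part has phase `e^{iks}`, while for small `ε` the ratio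
`Q z / Q 0` stays in the unit disc about `1`, where `arg` is continuous, so it contributes no net
winding and `G₀/|G₀|` winds exactly `(2k-2) - (k-2) = k` times.
-/

open Polynomial ComplexConjugate

namespace Polynomial

variable {R : Type*} [CommRing R]

theorem exists_eq_X_pow_rootMultiplicity_mul {p : R[X]} (hp : p ≠ 0) :
    ∃ q : R[X], p = X ^ p.rootMultiplicity 0 * q ∧ q.eval 0 ≠ 0 := by
  obtain ⟨q, hpq, hq⟩ := p.exists_eq_pow_rootMultiplicity_mul_and_not_dvd hp 0
  rw [map_zero, sub_zero] at hpq hq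
  exact ⟨q, hpq, by rwa [X_dvd_iff, coeff_zero_eq_eval_zero] at hq⟩

theorem exists_derivative_eq_X_pow_mul [NoZeroDivisors R] [CharZero R] {p q : R[X]} {n : ℕ}
    (hp : p = X ^ (n + 1) * q) (hq : q.eval 0 ≠ 0) :
    ∃ r : R[X], derivative p = X ^ n * r ∧ r.eval 0 ≠ 0 := by
  refine ⟨C ((n + 1 : ℕ) : R) * q + X * derivative q, ?_, ?_⟩
  · rw [hp, derivative_mul, derivative_X_pow, Nat.add_sub_cancel]
    ring
  · simpa using mul_ne_zero (Nat.cast_ne_zero.2 n.succ_ne_zero) hq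

end Polynomial

namespace Complex

theorem mul_div_norm_mul (x y : ℂ) : x * y / (‖x * y‖ : ℂ) = x / ‖x‖ * (y / ‖y‖) := by
  rw [norm_mul, ofReal_mul, mul_div_mul_comm]

theorem div_norm_eq_exp_arg {x : ℂ} (hx : x ≠ 0) : x / ‖x‖ = exp (arg x * I) := by
  rw [div_eq_iff (ofReal_ne_zero.2 (norm_ne_zero_iff.2 hx)), mul_comm, norm_mul_exp_arg_mul_I]

theorem div_norm_eq_exp_arg_mul_exp_arg_div {x y : ℂ} (hx : x ≠ 0) (hy : y ≠ 0) :
    y / ‖y‖ = exp (arg x * I) * exp (arg (y / x) * I) := by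
  calc y / ‖y‖ = x * (y / x) / ‖x * (y / x)‖ := by rw [mul_div_cancel₀ y hx]
    _ = _ := by
      rw [mul_div_norm_mul, div_norm_eq_exp_arg hx, div_norm_eq_exp_arg (div_ne_zero hy hx)]

theorem circleMap_zero_pow_mul_conj_pow (ε s : ℝ) (a b : ℕ) :
    circleMap 0 ε s ^ a * conj (circleMap 0 ε s) ^ b =
      ((ε ^ (a + b) : ℝ) : ℂ) * exp (I * (((a - b) * s : ℝ) : ℂ)) := by
  rw [conj_circleMap_zero, circleMap_zero, circleMap_zero, mul_pow, mul_pow, ← exp_nat_mul,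
    ← exp_nat_mul, mul_mul_mul_comm, ← pow_add, ← exp_add]
  push_cast
  ring_nf

theorem circleMap_zero_pow_mul_conj_pow_div_norm {ε : ℝ} (hε : 0 < ε) (s : ℝ) (a b : ℕ) :
    circleMap 0 ε s ^ a * conj (circleMap 0 ε s) ^ b /
        ‖circleMap 0 ε s ^ a * conj (circleMap 0 ε s) ^ b‖ =
      exp (I * (((a - b) * s : ℝ) : ℂ)) := by
  rw [circleMap_zero_pow_mul_conj_pow, mul_div_norm_mul, norm_exp_I_mul_ofReal, ofReal_one,
    div_one, norm_real, Real.norm_of_nonneg (by positivity), div_self (by simp [hε.ne']), one_mul]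

end Complex

theorem exists_lift_circleMap_of_eq_pow_mul_conj_pow_mul {F Q : ℂ → ℂ} {a b : ℕ}
    (hF : ∀ z, F z = z ^ a * conj z ^ b * Q z) (hQ : Continuous Q) (hQ0 : Q 0 ≠ 0) :
    ∃ ε₀ : ℝ, 0 < ε₀ ∧ (∀ z : ℂ, z ≠ 0 → ‖z‖ < ε₀ → F z ≠ 0) ∧
      ∀ ε : ℝ, 0 < ε → ε < ε₀ →
        ∃ θ : ℝ → ℝ, Continuous θ ∧
          (∀ s : ℝ, F (circleMap 0 ε s) / (‖F (circleMap 0 ε s)‖ : ℂ) = exp (I * θ s)) ∧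
          θ (2 * π) - θ 0 = 2 * π * ((a : ℝ) - b) := by
  obtain ⟨δ, hδ, hQδ⟩ : ∃ δ > 0, ∀ z : ℂ, ‖z‖ < δ → ‖Q z / Q 0 - 1‖ < 1 := by
    have hcont : ContinuousAt (fun z => Q z / Q 0) 0 := (hQ.div_const _).continuousAt
    obtain ⟨δ, hδ, h⟩ := Metric.continuousAt_iff.1 hcont 1 one_pos
    refine ⟨δ, hδ, fun z hz => ?_⟩
    simpa [Complex.dist_eq, div_self hQ0] using h (x := z) (by simpa [Complex.dist_eq] using hz)
  have hQne : ∀ z : ℂ, ‖z‖ < δ → Q z ≠ 0 := fun z hz hQz => by simpa [hQz] using hQδ z hz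
  have hslit : ∀ z : ℂ, ‖z‖ < δ → Q z / Q 0 ∈ slitPlane := fun z hz => by
    simpa using mem_slitPlane_of_norm_lt_one (hQδ z hz)
  refine ⟨δ, hδ, fun z hz hzδ => ?_, fun ε hε hεδ => ?_⟩
  · rw [hF]
    exact mul_ne_zero (mul_ne_zero (pow_ne_zero _ hz) (pow_ne_zero _ ((_root_.map_ne_zero _).2 hz)))
      (hQne z hzδ)
  have hcirc : ∀ s, ‖circleMap 0 ε s‖ < δ := fun s => by
    rwa [norm_circleMap_zero, abs_of_pos hε]
  refine ⟨fun s => (a - b) * s + arg (Q 0) + arg (Q (circleMap 0 ε s) / Q 0), ?_, fun s => ?_, ?_⟩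
  · refine ((continuous_const.mul continuous_id).add continuous_const).add ?_
    exact continuous_iff_continuousAt.2 fun s => (continuousAt_arg (hslit _ (hcirc s))).comp
      (f := fun s => Q (circleMap 0 ε s) / Q 0)
      ((hQ.comp (continuous_circleMap 0 ε)).div_const _).continuousAt
  · rw [hF, mul_div_norm_mul, circleMap_zero_pow_mul_conj_pow_div_norm hε,
      div_norm_eq_exp_arg_mul_exp_arg_div hQ0 (hQne _ (hcirc s)), ← Complex.exp_add, ← Complex.exp_add]
    push_cast
    ring_nf
  · simp only [(periodic_circleMap 0 ε).eq]
    ring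

theorem winding_of_G0_general (f : Polynomial ℂ) (hf : f ≠ 0) (k : ℕ) (hk : 2 ≤ k)
    (hmult : f.rootMultiplicity 0 = k) :
    ∃ ε₀ : ℝ, 0 < ε₀ ∧ (∀ z : ℂ, z ≠ 0 → ‖z‖ < ε₀ → G0 f z ≠ 0) ∧
      ∀ ε : ℝ, 0 < ε → ε < ε₀ →
        ∃ θ : ℝ → ℝ, Continuous θ ∧
          (∀ s : ℝ, G0 f (circleMap 0 ε s) / (‖G0 f (circleMap 0 ε s)‖ : ℂ) =
            Complex.exp (Complex.I * θ s)) ∧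
          θ (2 * π) - θ 0 = 2 * π * (k : ℝ) := by
  obtain ⟨j, rfl⟩ : ∃ j, k = j + 2 := ⟨k - 2, by omega⟩
  obtain ⟨g, hfg, hg0⟩ := exists_eq_X_pow_rootMultiplicity_mul hf
  rw [hmult] at hfg
  obtain ⟨h, hf', hh0⟩ := exists_derivative_eq_X_pow_mul hfg hg0
  obtain ⟨m, hf'', hm0⟩ := exists_derivative_eq_X_pow_mul hf' hh0
  set Q : ℂ → ℂ := fun z => -2 * I * h.eval z ^ 2 * conj (m.eval z)
  have hG0 : ∀ z, G0 f z = z ^ (2 * j + 2) * conj z ^ j * Q z := fun z => by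
    rw [G0, hf'', hf']
    simp only [eval_mul, eval_pow, eval_X, map_mul, map_pow, Q]
    ring
  have hQ : Continuous Q := by fun_prop
  have hQ0 : Q 0 ≠ 0 := by simp [Q, hh0, hm0]
  obtain ⟨ε₀, hε₀, hne, hwind⟩ := exists_lift_circleMap_of_eq_pow_mul_conj_pow_mul hG0 hQ hQ0
  refine ⟨ε₀, hε₀, hne, fun ε hε hεε₀ => ?_⟩
  obtain ⟨θ, hθ, hlift, hdeg⟩ := hwind ε hε hεε₀
  exact ⟨θ, hθ, hlift, by rw [hdeg]; push_cast; ring⟩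

theorem winding_of_G0 (f : Polynomial ℂ) (hf : f ≠ 0) (k : ℕ) (hk : 2 ≤ k)
    (h0 : f.eval 0 = 0) (hmult : f.rootMultiplicity 0 = k) :
    ∃ ε₀ : ℝ, 0 < ε₀ ∧ (∀ z : ℂ, z ≠ 0 → ‖z‖ < ε₀ → G0 f z ≠ 0) ∧
      ∀ ε : ℝ, 0 < ε → ε < ε₀ →
        ∃ θ : ℝ → ℝ, Continuous θ ∧
          (∀ s : ℝ, G0 f (circleMap 0 ε s) / (‖G0 f (circleMap 0 ε s)‖ : ℂ) =
            Complex.exp (Complex.I * θ s)) ∧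
          θ (2 * π) - θ 0 = 2 * π * (k : ℝ) :=
  winding_of_G0_general f hf k hk hmult
end
end

section
/- Let f : ℂ → ℂ be a complex polynomial with f(0) = 0 of multiplicity k ≥ 2 at the origin, so f(z) = c z^k + (higher order terms) with c ≠ 0. Then for the mixed polynomial G₀(z) = −2i(f'(z))²conj(f''(z)), in a sufficiently small punctured neighborhood of 0 the equality |2 f''(z)|f'(z)|²|f''(z)|² − f'(z)f'''(z)|f'(z)|²conj(f''(z))| = |f'(z)f''(z)|f'(z)|²conj(f'''(z)) − (f'(z))²|f''(z)|²conj(f''(z))| fails, i.e., there exists ε > 0 such that no z with 0 < |z| < ε satisfies this equation. -/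
open Complex

noncomputable section

def d1 (f : Polynomial ℂ) (z : ℂ) : ℂ := f.derivative.eval z
def d2 (f : Polynomial ℂ) (z : ℂ) : ℂ := f.derivative.derivative.eval z
def d3 (f : Polynomial ℂ) (z : ℂ) : ℂ := f.derivative.derivative.derivative.eval z

/-!
Both sides factor through `|f'|² |f''|`: writing `A, B, C` for `f', f'', f'''`, the equation reads
`|A|² |B| |2B² - AC| = |A|² |B| |B² - AC|`, i.e. `|A²B(2B² - AC)| = |A²B(B² - AC)|`, an equation
between moduli of two holomorphic polynomials. If `f = c z^k + …`, their lowest-order terms are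
`k⁶(k-1)²c⁵ z^{5k-8}` and `k⁵(k-1)²c⁵ z^{5k-8}`; since `k > 1` the first dominates the second
on a punctured neighbourhood of `0`.
-/

open Polynomial Filter Topology

theorem norm_critical_lhs_eq (A B C : ℂ) :
    ‖2 * B * (‖A‖ : ℂ) ^ 2 * (‖B‖ : ℂ) ^ 2 - A * C * (‖A‖ : ℂ) ^ 2 * starRingEnd ℂ B‖ =
      ‖A ^ 2 * B * (2 * B ^ 2 - A * C)‖ := by
  rw [← mul_conj', ← mul_conj',
    show 2 * B * (A * starRingEnd ℂ A) * (B * starRingEnd ℂ B) - A * C * (A * starRingEnd ℂ A) *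
        starRingEnd ℂ B = starRingEnd ℂ (A * B) * (A * (2 * B ^ 2 - A * C)) by
      rw [map_mul]; ring]
  simp only [norm_mul, norm_conj, norm_pow]
  ring

theorem norm_critical_rhs_eq (A B C : ℂ) :
    ‖A * B * (‖A‖ : ℂ) ^ 2 * starRingEnd ℂ C - A ^ 2 * (‖B‖ : ℂ) ^ 2 * starRingEnd ℂ B‖ =
      ‖A ^ 2 * B * (B ^ 2 - A * C)‖ := by
  rw [← mul_conj', ← mul_conj',
    show A * B * (A * starRingEnd ℂ A) * starRingEnd ℂ C - A ^ 2 * (B * starRingEnd ℂ B) *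
        starRingEnd ℂ B = A ^ 2 * B * starRingEnd ℂ (A * C - B ^ 2) by
      simp only [map_sub, map_mul, map_pow]; ring]
  rw [norm_mul, norm_mul _ (B ^ 2 - A * C), norm_conj, norm_sub_rev]

section LowestOrderTerm

variable {R : Type*} [CommRing R]

def HasLowestOrderTerm (p : R[X]) (n : ℕ) (c : R) : Prop :=
  ∃ q : R[X], p = X ^ n * q ∧ q.eval 0 = c

theorem exists_hasLowestOrderTerm_rootMultiplicity {f : R[X]} (hf : f ≠ 0) :
    ∃ c ≠ 0, HasLowestOrderTerm f (f.rootMultiplicity 0) c := by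
  have h := pow_mul_divByMonic_rootMultiplicity_eq f 0
  have hc := eval_divByMonic_pow_rootMultiplicity_ne_zero 0 hf
  rw [map_zero, sub_zero] at h hc
  exact ⟨_, hc, _, h.symm, rfl⟩

theorem hasLowestOrderTerm_X : HasLowestOrderTerm (X : R[X]) 1 1 :=
  ⟨1, by simp, eval_one⟩

namespace HasLowestOrderTerm

variable {p q : R[X]} {m n : ℕ} {a b : R}

theorem mul (hp : HasLowestOrderTerm p m a) (hq : HasLowestOrderTerm q n b) :
    HasLowestOrderTerm (p * q) (m + n) (a * b) := by
  obtain ⟨p', rfl, rfl⟩ := hp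
  obtain ⟨q', rfl, rfl⟩ := hq
  exact ⟨p' * q', by ring, eval_mul⟩

theorem sub (hp : HasLowestOrderTerm p n a) (hq : HasLowestOrderTerm q n b) :
    HasLowestOrderTerm (p - q) n (a - b) := by
  obtain ⟨p', rfl, rfl⟩ := hp
  obtain ⟨q', rfl, rfl⟩ := hq
  exact ⟨p' - q', by ring, eval_sub _ _ _⟩

theorem C_mul (hp : HasLowestOrderTerm p n a) (r : R) :
    HasLowestOrderTerm (C r * p) n (r * a) := by
  obtain ⟨p', rfl, rfl⟩ := hp
  exact ⟨C r * p', by ring, by simp⟩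

theorem derivative (hp : HasLowestOrderTerm p (n + 1) a) :
    HasLowestOrderTerm (derivative p) n ((n + 1) * a) := by
  obtain ⟨p', rfl, rfl⟩ := hp
  refine ⟨C ((n + 1 : ℕ) : R) * p' + X * Polynomial.derivative p', ?_, by simp⟩
  rw [derivative_mul, derivative_X_pow, Nat.add_sub_cancel]
  ring

theorem X_mul_derivative (hp : HasLowestOrderTerm p n a) :
    HasLowestOrderTerm (X * Polynomial.derivative p) n (n * a) := by
  cases n with
  | zero =>
    obtain ⟨p', rfl, -⟩ := hp
    exact ⟨X * Polynomial.derivative p', by simp, by simp⟩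
  | succ n =>
    have h := (hasLowestOrderTerm_X (R := R)).mul hp.derivative
    rw [add_comm 1 n, one_mul] at h
    exact_mod_cast h

end HasLowestOrderTerm

/- The factor `X` gives `f' · X f'''` a lowest-order term at the exponent of `X f''²` also when
`f` vanishes to order exactly `2`, where `f'''` would need the exponent `-1`. -/
def criticalPoly (f : R[X]) (t : R) : R[X] :=
  derivative f * derivative f * derivative (derivative f) *
    (C t * (X * (derivative (derivative f) * derivative (derivative f))) -
      derivative f * (X * derivative (derivative (derivative f))))

theorem hasLowestOrderTerm_criticalPoly {f : R[X]} {m : ℕ} {c : R}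
    (hf : HasLowestOrderTerm f (m + 2) c) (t : R) :
    HasLowestOrderTerm (criticalPoly f t) (5 * m + 3)
      ((m + 2) ^ 5 * (m + 1) ^ 2 * c ^ 5 * (t * (m + 1) - m)) := by
  have h1 := hf.derivative
  have h2 := h1.derivative
  have h3 := h2.X_mul_derivative
  have hB2 := (hasLowestOrderTerm_X.mul (h2.mul h2)).C_mul t
  have hAC := h1.mul h3
  rw [show m + 1 + m = 1 + (m + m) by omega] at hAC
  unfold criticalPoly
  convert ((h1.mul h1).mul h2).mul (hB2.sub hAC) using 1
  · omega
  push_cast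
  ring

end LowestOrderTerm

theorem HasLowestOrderTerm.eventually_norm_lt {𝕜 : Type*} [NormedField 𝕜] {p q : 𝕜[X]} {n : ℕ}
    {a b : 𝕜} (hp : HasLowestOrderTerm p n a) (hq : HasLowestOrderTerm q n b) (hab : ‖b‖ < ‖a‖) :
    ∀ᶠ z in 𝓝[≠] 0, ‖q.eval z‖ < ‖p.eval z‖ := by
  obtain ⟨p', rfl, rfl⟩ := hp
  obtain ⟨q', rfl, rfl⟩ := hq
  have h0 : ∀ᶠ z in 𝓝 0, ‖q'.eval z‖ < ‖p'.eval z‖ :=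
    q'.continuous.norm.continuousAt.eventually_lt p'.continuous.norm.continuousAt hab
  filter_upwards [nhdsWithin_le_nhds h0, self_mem_nhdsWithin] with z hz hz0
  simp only [eval_mul, eval_pow, eval_X, norm_mul, norm_pow]
  exact mul_lt_mul_of_pos_left hz (pow_pos (norm_pos_iff.mpr hz0) n)

theorem eval_criticalPoly (f : ℂ[X]) (t z : ℂ) :
    (criticalPoly f t).eval z = z * (d1 f z ^ 2 * d2 f z * (t * d2 f z ^ 2 - d1 f z * d3 f z)) := by
  simp only [criticalPoly, d1, d2, d3, eval_mul, eval_sub, eval_C, eval_X]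
  ring

theorem eventually_norm_criticalPoly_lt {f : ℂ[X]} {m : ℕ} {c : ℂ}
    (hf : HasLowestOrderTerm f (m + 2) c) (hc : c ≠ 0) :
    ∀ᶠ z in 𝓝[≠] 0, ‖(criticalPoly f 1).eval z‖ < ‖(criticalPoly f 2).eval z‖ := by
  refine (hasLowestOrderTerm_criticalPoly hf 2).eventually_norm_lt
    (hasLowestOrderTerm_criticalPoly hf 1) ?_
  have hm1 : ‖(m + 1 : ℂ)‖ = m + 1 := by exact_mod_cast Complex.norm_natCast (m + 1)
  have hm2 : ‖(m + 2 : ℂ)‖ = m + 2 := by exact_mod_cast Complex.norm_natCast (m + 2)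
  rw [show (1 : ℂ) * (m + 1) - m = 1 by ring, show (2 : ℂ) * (m + 1) - m = m + 2 by ring]
  simp only [norm_mul, norm_pow, mul_one, hm1, hm2]
  exact lt_mul_of_one_lt_right (mul_pos (by positivity) (pow_pos (norm_pos_iff.mpr hc) 5))
    (by linarith)

theorem critical_equation_fails_near_origin_general (f : Polynomial ℂ) (hf : f ≠ 0) (k : ℕ)
    (hk : 2 ≤ k) (hmult : f.rootMultiplicity 0 = k) :
    ∃ ε : ℝ, 0 < ε ∧ ∀ z : ℂ, 0 < ‖z‖ → ‖z‖ < ε →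
      ‖2 * d2 f z * (‖d1 f z‖ : ℂ) ^ 2 *
            (‖d2 f z‖ : ℂ) ^ 2 -
          d1 f z * d3 f z * (‖d1 f z‖ : ℂ) ^ 2 * (starRingEnd ℂ) (d2 f z)‖ ≠
        ‖d1 f z * d2 f z * (‖d1 f z‖ : ℂ) ^ 2 *
            (starRingEnd ℂ) (d3 f z) -
          (d1 f z) ^ 2 * (‖d2 f z‖ : ℂ) ^ 2 * (starRingEnd ℂ) (d2 f z)‖ := by
  obtain ⟨c, hc, hfc⟩ := exists_hasLowestOrderTerm_rootMultiplicity hf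
  obtain ⟨m, rfl⟩ : ∃ m, k = m + 2 := ⟨k - 2, by omega⟩
  rw [hmult] at hfc
  obtain ⟨ε, hε, hball⟩ := Metric.mem_nhdsWithin_iff.mp (eventually_norm_criticalPoly_lt hfc hc)
  refine ⟨ε, hε, fun z hz hzε heq => ?_⟩
  have hlt := hball ⟨mem_ball_zero_iff.mpr hzε, norm_pos_iff.mp hz⟩
  rw [norm_critical_lhs_eq, norm_critical_rhs_eq] at heq
  rw [Set.mem_ofPred_eq, eval_criticalPoly, eval_criticalPoly, one_mul, norm_mul z, norm_mul z,
    heq] at hlt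
  exact lt_irrefl _ hlt

theorem critical_equation_fails_near_origin (f : Polynomial ℂ) (hf : f ≠ 0) (k : ℕ)
    (hk : 2 ≤ k) (h0 : f.eval 0 = 0) (hmult : f.rootMultiplicity 0 = k) :
    ∃ ε : ℝ, 0 < ε ∧ ∀ z : ℂ, 0 < ‖z‖ → ‖z‖ < ε →
      ‖2 * d2 f z * (‖d1 f z‖ : ℂ) ^ 2 *
            (‖d2 f z‖ : ℂ) ^ 2 -
          d1 f z * d3 f z * (‖d1 f z‖ : ℂ) ^ 2 * (starRingEnd ℂ) (d2 f z)‖ ≠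
        ‖d1 f z * d2 f z * (‖d1 f z‖ : ℂ) ^ 2 *
            (starRingEnd ℂ) (d3 f z) -
          (d1 f z) ^ 2 * (‖d2 f z‖ : ℂ) ^ 2 * (starRingEnd ℂ) (d2 f z)‖ :=
  critical_equation_fails_near_origin_general f hf k hk hmult

end
end
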